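/- Let g_i(w_2, w_3, w_4) in Z/2[w_2, w_3, w_4] be defined by g_0 = 1, g_1 = 0, and g_i = w_2 g_{i-2} + w_3 g_{i-3} + w_4 g_{i-4} for i \geq 2. Then for i \geq 1, g_i(w_2,w_3,w_4) = 0 if and only if i = 2^t - 3 for some integer t \geq 2. -/
import Mathlib


open MvPolynomial

private noncomputable def phiAux : MvPolynomial ℕ (ZMod 2) →ₐ[ZMod 2] MvPolynomial ℕ (ZMod 2) :=
  aeval fun j => if j = 2 then X 2 else 0

private lemma phiAux_X2 : phiAux (X 2) = X 2 := by simp [phiAux]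
private lemma phiAux_X3 : phiAux (X 3) = 0 := by simp [phiAux]
private lemma phiAux_X4 : phiAux (X 4) = 0 := by simp [phiAux]

/-- Lemma 2.2(ii): In `ℤ/2[w₂, w₃, w₄]` (here `X j` denotes `w_j`), let `g i` be defined
by `g 0 = 1`, `g 1 = 0` and `g i = w₂ g_{i-2} + w₃ g_{i-3} + w₄ g_{i-4}` for `i ≥ 2`
(with `g_j = 0` for `j < 0`).  Then for `i ≥ 1`, `g i = 0` iff `i = 2^t - 3` for some
`t ≥ 2`. -/
theorem g4_eq_zero_iff_pow_two_sub_three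
    (g : ℕ → MvPolynomial ℕ (ZMod 2))
    (h0 : g 0 = 1) (h1 : g 1 = 0)
    (h2 : g 2 = X 2 * g 0)
    (h3 : g 3 = X 2 * g 1 + X 3 * g 0)
    (hrec : ∀ i : ℕ, g (i + 4) = X 2 * g (i + 2) + X 3 * g (i + 1) + X 4 * g i) :
    ∀ i : ℕ, 1 ≤ i → (g i = 0 ↔ ∃ t : ℕ, 2 ≤ t ∧ i = 2 ^ t - 3) := by
  have htwo : (2 : MvPolynomial ℕ (ZMod 2)) = 0 := by
    have := CharP.cast_eq_zero (MvPolynomial ℕ (ZMod 2)) 2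
    simpa using this
  -- normalized small recurrences
  have r0 : g 4 = X 2 * g 2 + X 3 * g 1 + X 4 * g 0 := by
    have r := hrec 0
    rwa [show (0:ℕ)+4 = 4 by norm_num, show (0:ℕ)+2 = 2 by norm_num,
      show (0:ℕ)+1 = 1 by norm_num] at r
  have r1 : g 5 = X 2 * g 3 + X 3 * g 2 + X 4 * g 1 := by
    have r := hrec 1
    rwa [show (1:ℕ)+4 = 5 by norm_num, show (1:ℕ)+2 = 3 by norm_num,
      show (1:ℕ)+1 = 2 by norm_num] at r
  have r2 : g 6 = X 2 * g 4 + X 3 * g 3 + X 4 * g 2 := by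
    have r := hrec 2
    rwa [show (2:ℕ)+4 = 6 by norm_num, show (2:ℕ)+2 = 4 by norm_num,
      show (2:ℕ)+1 = 3 by norm_num] at r
  have r3 : g 7 = X 2 * g 5 + X 3 * g 4 + X 4 * g 3 := by
    have r := hrec 3
    rwa [show (3:ℕ)+4 = 7 by norm_num, show (3:ℕ)+2 = 5 by norm_num,
      show (3:ℕ)+1 = 4 by norm_num] at r
  -- the doubling identities (char 2)
  have key : ∀ m : ℕ, g (2*m+4) = g (m+2)^2 + X 2 * g (m+1)^2 + X 4 * g m^2
      ∧ g (2*m+5) = X 3 * g (m+1)^2 := by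
    intro m
    induction m using Nat.strong_induction_on with
    | _ m ih =>
      match m with
      | 0 =>
        constructor
        · rw [show 2*0+4 = 4 by norm_num, show (0:ℕ)+2 = 2 by norm_num,
            show (0:ℕ)+1 = 1 by norm_num, r0, h2, h1, h0]
          ring
        · rw [show 2*0+5 = 5 by norm_num, show (0:ℕ)+1 = 1 by norm_num,
            r1, h3, h2, h1, h0]
          linear_combination (X 2 * X 3) * htwo
      | 1 =>
        constructor
        · rw [show 2*1+4 = 6 by norm_num, show (1:ℕ)+2 = 3 by norm_num,
            show (1:ℕ)+1 = 2 by norm_num, r2, r0, h3, h2, h1, h0]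
          linear_combination (X 2 * X 4) * htwo
        · rw [show 2*1+5 = 7 by norm_num, show (1:ℕ)+1 = 2 by norm_num,
            r3, r1, r0, h3, h2, h1, h0]
          linear_combination (X 2 ^ 2 * X 3 + X 3 * X 4) * htwo
      | (k+2) =>
        obtain ⟨e1, o1⟩ := ih k (by omega)
        obtain ⟨e2, o2⟩ := ih (k+1) (by omega)
        rw [show 2*(k+1)+4 = 2*k+6 by omega, show (k+1)+2 = k+3 by omega,
          show (k+1)+1 = k+2 by omega] at e2
        rw [show 2*(k+1)+5 = 2*k+7 by omega, show (k+1)+1 = k+2 by omega] at o2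
        have hr : g (k+4) = X 2 * g (k+2) + X 3 * g (k+1) + X 4 * g k := hrec k
        have r : g (2*k+8) = X 2 * g (2*k+6) + X 3 * g (2*k+5) + X 4 * g (2*k+4) := by
          have r := hrec (2*k+4)
          rwa [show 2*k+4+4 = 2*k+8 by omega, show 2*k+4+2 = 2*k+6 by omega,
            show 2*k+4+1 = 2*k+5 by omega] at r
        have r' : g (2*k+9) = X 2 * g (2*k+7) + X 3 * g (2*k+6) + X 4 * g (2*k+5) := by
          have r := hrec (2*k+5)
          rwa [show 2*k+5+4 = 2*k+9 by omega, show 2*k+5+2 = 2*k+7 by omega,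
            show 2*k+5+1 = 2*k+6 by omega] at r
        constructor
        · rw [show 2*(k+2)+4 = 2*k+8 by omega, show (k+2)+2 = k+4 by omega,
            show (k+2)+1 = k+3 by omega, r, e2, o1, e1, hr]
          linear_combination (X 2 * X 4 * g (k+1)^2 - X 2 * X 3 * g (k+1) * g (k+2)
            - X 2 * X 4 * g k * g (k+2) - X 3 * X 4 * g k * g (k+1)) * htwo
        · rw [show 2*(k+2)+5 = 2*k+9 by omega, show (k+2)+1 = k+3 by omega,
            r', o2, e2, o1]
          linear_combination (X 2 * X 3 * g (k+2)^2 + X 3 * X 4 * g (k+1)^2) * htwo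
  -- odd identity in full generality
  have hodd : ∀ m : ℕ, g (2*m+3) = X 3 * g m ^ 2 := by
    intro m
    match m with
    | 0 => rw [show 2*0+3 = 3 by norm_num, h3, h1, h0]; ring
    | (k+1) =>
      rw [show 2*(k+1)+3 = 2*k+5 by omega]
      exact (key k).2
  -- even-index polynomials are nonzero, via the substitution w₃ = w₄ = 0
  have hphi : ∀ m : ℕ, phiAux (g (2*m+2)) = X 2 ^ (m+1) ∧ phiAux (g (2*m+3)) = 0 := by
    intro m
    induction m with
    | zero =>
      constructor
      · rw [show 2*0+2 = 2 by norm_num, h2, h0, map_mul, map_one, phiAux_X2]; ring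
      · rw [show 2*0+3 = 3 by norm_num, h3, h1, h0, map_add, map_mul, map_mul,
          map_zero, map_one, phiAux_X2, phiAux_X3]; ring
    | succ k ihk =>
      obtain ⟨ihe, iho⟩ := ihk
      have r : g (2*k+4) = X 2 * g (2*k+2) + X 3 * g (2*k+1) + X 4 * g (2*k) := hrec (2*k)
      have r' : g (2*k+5) = X 2 * g (2*k+3) + X 3 * g (2*k+2) + X 4 * g (2*k+1) := hrec (2*k+1)
      constructor
      · rw [show 2*(k+1)+2 = 2*k+4 by omega, r, map_add, map_add, map_mul, map_mul,
          map_mul, phiAux_X2, phiAux_X3, phiAux_X4, ihe]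
        ring
      · rw [show 2*(k+1)+3 = 2*k+5 by omega, r', map_add, map_add, map_mul, map_mul,
          map_mul, phiAux_X2, phiAux_X3, phiAux_X4, iho]
        ring
  have heven : ∀ m : ℕ, g (2*m+2) ≠ 0 := by
    intro m h
    have h' := (hphi m).1
    rw [h, map_zero] at h'
    exact pow_ne_zero _ (X_ne_zero 2) h'.symm
  -- zero direction
  have hzero : ∀ t : ℕ, 2 ≤ t → g (2^t - 3) = 0 := by
    intro t ht
    induction t, ht using Nat.le_induction with
    | base => rw [show 2^2-3 = 1 by norm_num, h1]
    | succ t ht ih =>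
      have h4 : 4 ≤ 2^t := by
        calc (4:ℕ) = 2^2 := by norm_num
        _ ≤ 2^t := Nat.pow_le_pow_right (by norm_num) ht
      rw [show 2^(t+1)-3 = 2*(2^t-3)+3 by rw [pow_succ]; omega, hodd, ih]
      simp
  -- forward direction
  have main : ∀ i : ℕ, 1 ≤ i → g i = 0 → ∃ t : ℕ, 2 ≤ t ∧ i = 2 ^ t - 3 := by
    intro i
    induction i using Nat.strong_induction_on with
    | _ i ih =>
      intro hi hgi
      rcases Nat.even_or_odd i with he | ho
      · obtain ⟨k, hk⟩ := he
        have hk1 : 1 ≤ k := by omega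
        exact absurd (by rw [show 2*(k-1)+2 = i by omega]; exact hgi) (heven (k-1))
      · obtain ⟨k, hk⟩ := ho
        rcases k with _ | m
        · exact ⟨2, le_refl 2, by norm_num; omega⟩
        · have h' : g (2*m+3) = 0 := by rw [show 2*m+3 = i by omega]; exact hgi
          rw [hodd] at h'
          have hgm : g m = 0 := by
            rcases mul_eq_zero.mp h' with h | h
            · exact absurd h (X_ne_zero 3)
            · exact (pow_eq_zero_iff (by norm_num)).mp h
          rcases Nat.eq_zero_or_pos m with hm0 | hm1
          · rw [hm0, h0] at hgm
            exact absurd hgm one_ne_zero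
          · obtain ⟨s, hs2, hseq⟩ := ih m (by omega) hm1 hgm
            have h4 : 4 ≤ 2^s := by
              calc (4:ℕ) = 2^2 := by norm_num
              _ ≤ 2^s := Nat.pow_le_pow_right (by norm_num) hs2
            have hp : 2^(s+1) = 2^s * 2 := pow_succ 2 s
            exact ⟨s+1, by omega, by omega⟩
  intro i hi
  constructor
  · exact main i hi
  · rintro ⟨t, ht, rfl⟩
    exact hzero t ht
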